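/- arXiv:1207.5255 — 5 statements merged into one kernel-verified Lean document; each statement's English description precedes it below -/
import Mathlib

section
/- Let G be a countable group and let {g_i} be a sequence in G. Suppose {C_i} (i ≥ 0) is an increasing sequence of finite subsets of G with C_i = C_i^{-1} for all i, C_i \ (C_{i-1})^5 nonempty for i ≥ 1, and g_i ∈ C_i \ (C_{i-1})^5 for each i ≥ 1. Then for any fixed g ∈ G, there are at most 2 pairs (i,j) with i ≠ j such that g_i · g · g_j^{-1} ∈ C_0. -/
/-!
Call `(i, j)` a solution if `g_ i * g * (g_ j)⁻¹ ∈ C 0`. Two solutions let one express a `g_ n`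
as a product of five elements of `C n` (solutions and earlier `g_`'s), which `g_ n ∉ C n ^ 5`
forbids whenever `n` is the largest index involved. Hence each coordinate of a solution
determines the other, and if `(m, j)` is a solution with `m` the largest index among finitely
many solutions, each of the others has the form `(k, m)`, so there is at most one of them.
Replacing `g` by `g⁻¹` swaps the coordinates and handles the case of a solution `(j, m)`.
-/

open Pointwise

section

variable {G : Type*} [Group G] [DecidableEq G]

theorem Finset.mul_mem_pow_five {s : Finset G} {a b c d e : G}
    (ha : a ∈ s) (hb : b ∈ s) (hc : c ∈ s) (hd : d ∈ s) (he : e ∈ s) :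
    a * b * c * d * e ∈ s ^ 5 := by
  rw [pow_succ, pow_succ, pow_succ, pow_succ, pow_one]
  exact mul_mem_mul (mul_mem_mul (mul_mem_mul (mul_mem_mul ha hb) hc) hd) he

theorem Finset.mul_mul_inv_mem_comm {s : Finset G} (hs : s⁻¹ = s) {a b g : G} :
    a * g * b⁻¹ ∈ s ↔ b * g⁻¹ * a⁻¹ ∈ s := by
  conv_lhs => rw [← hs, Finset.mem_inv']
  simp only [mul_inv_rev, inv_inv, mul_assoc]

structure EscapesPowFive (C : ℕ → Finset G) (g_ : ℕ → G) : Prop where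
  mono : Monotone C
  inv_eq : ∀ i, (C i)⁻¹ = C i
  mem : ∀ i, g_ i ∈ C (i + 1) \ C i ^ 5

def solutionSet (C : ℕ → Finset G) (g_ : ℕ → G) (g : G) : Set (ℕ × ℕ) :=
  {p | p.1 ≠ p.2 ∧ g_ p.1 * g * (g_ p.2)⁻¹ ∈ C 0}

namespace EscapesPowFive

variable {C : ℕ → Finset G} {g_ : ℕ → G} {g : G} {p q r : ℕ × ℕ}

theorem inv_mem (h : EscapesPowFive C g_) {n : ℕ} {x : G} (hx : x ∈ C n) : x⁻¹ ∈ C n :=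
  h.inv_eq n ▸ Finset.inv_mem_inv hx

theorem mem_of_lt (h : EscapesPowFive C g_) {i n : ℕ} (hi : i < n) : g_ i ∈ C n :=
  h.mono hi (Finset.mem_sdiff.1 (h.mem i)).1

theorem mem_of_mem_zero (h : EscapesPowFive C g_) {n : ℕ} {x : G} (hx : x ∈ C 0) :
    x ∈ C n :=
  h.mono n.zero_le hx

theorem not_mem_pow_five (h : EscapesPowFive C g_) (n : ℕ) : g_ n ∉ C n ^ 5 :=
  (Finset.mem_sdiff.1 (h.mem n)).2

theorem not_mem_of_lt (h : EscapesPowFive C g_) {i j k l : ℕ}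
    (hj : j < i) (hk : k < i) (hl : l < i) (hij : g_ i * g * (g_ j)⁻¹ ∈ C 0) :
    g_ k * g * (g_ l)⁻¹ ∉ C 0 := by
  intro hkl
  apply h.not_mem_pow_five i
  have key :
      g_ i = (g_ i * g * (g_ j)⁻¹) * g_ j * (g_ l)⁻¹ * (g_ k * g * (g_ l)⁻¹)⁻¹ * g_ k := by
    group
  rw [key]
  exact Finset.mul_mem_pow_five (h.mem_of_mem_zero hij) (h.mem_of_lt hj)
    (h.inv_mem (h.mem_of_lt hl)) (h.inv_mem (h.mem_of_mem_zero hkl)) (h.mem_of_lt hk)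

theorem eq_of_mem_of_mem (h : EscapesPowFive C g_) {i j l : ℕ}
    (hij : g_ i * g * (g_ j)⁻¹ ∈ C 0) (hil : g_ i * g * (g_ l)⁻¹ ∈ C 0) : j = l := by
  by_contra hjl
  wlog hlt : j < l generalizing j l
  · exact this hil hij (Ne.symm hjl) (by omega)
  apply h.not_mem_pow_five l
  set s := g_ i * g * (g_ j)⁻¹
  set t := g_ i * g * (g_ l)⁻¹
  -- `g_ l = t⁻¹ * s * g_ j`, padded by `s⁻¹ * s` to a product of five factors
  have key : g_ l = t⁻¹ * s * g_ j * s⁻¹ * s := by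
    simp only [s, t]
    group
  rw [key]
  have hs := h.mem_of_mem_zero (n := l) hij
  exact Finset.mul_mem_pow_five (h.inv_mem (h.mem_of_mem_zero hil)) hs 
    (h.mem_of_lt hlt) (h.inv_mem hs) hs

theorem swap_mem_solutionSet (h : EscapesPowFive C g_) (hp : p ∈ solutionSet C g_ g) :
    p.swap ∈ solutionSet C g_ g⁻¹ :=
  ⟨Ne.symm hp.1, (Finset.mul_mul_inv_mem_comm (h.inv_eq 0)).1 hp.2⟩

theorem eq_of_fst_eq (h : EscapesPowFive C g_) (hp : p ∈ solutionSet C g_ g)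
    (hq : q ∈ solutionSet C g_ g) (hpq : p.1 = q.1) : p = q := by
  refine Prod.ext hpq (h.eq_of_mem_of_mem hp.2 ?_)
  rw [hpq]
  exact hq.2

theorem eq_of_snd_eq (h : EscapesPowFive C g_) (hp : p ∈ solutionSet C g_ g)
    (hq : q ∈ solutionSet C g_ g) (hpq : p.2 = q.2) : p = q :=
  Prod.swap_injective <|
    h.eq_of_fst_eq (h.swap_mem_solutionSet hp) (h.swap_mem_solutionSet hq) hpq

theorem eq_or_snd_eq_of_le_fst (h : EscapesPowFive C g_) (hp : p ∈ solutionSet C g_ g)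
    (hq : q ∈ solutionSet C g_ g) (hp₂ : p.2 ≤ p.1) (hq₁ : q.1 ≤ p.1) (hq₂ : q.2 ≤ p.1) :
    q = p ∨ q.2 = p.1 := by
  by_cases hq₁' : q.1 = p.1
  · exact Or.inl (h.eq_of_fst_eq hq hp hq₁')
  by_cases hq₂' : q.2 = p.1
  · exact Or.inr hq₂'
  exact absurd hq.2
    (h.not_mem_of_lt (lt_of_le_of_ne hp₂ (Ne.symm hp.1)) (by omega) (by omega) hp.2)

theorem eq_of_ne_of_max_le (h : EscapesPowFive C g_) (hp : p ∈ solutionSet C g_ g)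
    (hq : q ∈ solutionSet C g_ g) (hr : r ∈ solutionSet C g_ g) (hqp : q ≠ p) (hrp : r ≠ p)
    (hq_le : max q.1 q.2 ≤ max p.1 p.2) (hr_le : max r.1 r.2 ≤ max p.1 p.2) : q = r := by
  wlog hp₂ : p.2 ≤ p.1 generalizing g p q r
  · refine Prod.swap_injective (this (h.swap_mem_solutionSet hp) (h.swap_mem_solutionSet hq)
      (h.swap_mem_solutionSet hr) (fun e => hqp (Prod.swap_injective e))
      (fun e => hrp (Prod.swap_injective e)) ?_ ?_
      (by simp only [Prod.fst_swap, Prod.snd_swap]; omega))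
    all_goals simpa only [Prod.fst_swap, Prod.snd_swap, max_comm]
  rw [max_eq_left hp₂] at hq_le hr_le
  obtain hq' | hq' := h.eq_or_snd_eq_of_le_fst hp hq hp₂ (le_of_max_le_left hq_le)
    (le_of_max_le_right hq_le)
  · exact absurd hq' hqp
  obtain hr' | hr' := h.eq_or_snd_eq_of_le_fst hp hr hp₂ (le_of_max_le_left hr_le)
    (le_of_max_le_right hr_le)
  · exact absurd hr' hrp
  exact h.eq_of_snd_eq hq hr (hq'.trans hr'.symm)

theorem card_le_two_of_subset (h : EscapesPowFive C g_) {T : Finset (ℕ × ℕ)}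
    (hT : ↑T ⊆ solutionSet C g_ g) : T.card ≤ 2 := by
  rcases T.eq_empty_or_nonempty with rfl | hne
  · simp
  obtain ⟨p, hpT, hp_max⟩ := T.exists_max_image (fun q => max q.1 q.2) hne
  have hrest : (T.erase p).card ≤ 1 := by
    refine Finset.card_le_one.2 fun q hq r hr => ?_
    rw [Finset.mem_erase] at hq hr
    exact h.eq_of_ne_of_max_le (hT hpT) (hT hq.2) (hT hr.2) hq.1 hr.1 (hp_max q hq.2)
      (hp_max r hr.2)
  have := Finset.card_erase_add_one hpT
  omega

theorem finite_solutionSet_and_ncard_le_two (h : EscapesPowFive C g_) :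
    (solutionSet C g_ g).Finite ∧ (solutionSet C g_ g).ncard ≤ 2 := by
  have hfin : (solutionSet C g_ g).Finite := Set.not_infinite.1 fun hinf => by
    obtain ⟨T, hT, hcard⟩ := hinf.exists_subset_card_eq 3
    have := h.card_le_two_of_subset hT
    omega
  refine ⟨hfin, ?_⟩
  rw [Set.ncard_eq_toFinset_card _ hfin]
  exact h.card_le_two_of_subset hfin.coe_toFinset.subset

end EscapesPowFive

end

theorem at_most_two_solutions_general {G : Type*} [Group G] [DecidableEq G]
    (C : ℕ → Finset G) (g_ : ℕ → G)
    (hmono : ∀ i, C i ⊆ C (i + 1))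
    (hsym : ∀ i, (C i)⁻¹ = C i)
    (hg : ∀ i, g_ i ∈ C (i + 1) \ (C i) ^ 5)
    (g : G) :
    {p : ℕ × ℕ | p.1 ≠ p.2 ∧ g_ p.1 * g * (g_ p.2)⁻¹ ∈ C 0}.Finite ∧
      {p : ℕ × ℕ | p.1 ≠ p.2 ∧ g_ p.1 * g * (g_ p.2)⁻¹ ∈ C 0}.ncard ≤ 2 :=
  EscapesPowFive.finite_solutionSet_and_ncard_le_two
    ⟨monotone_nat_of_le_succ hmono, hsym, hg⟩

/-- **Lemma (at most 2 solutions).** Let `G` be a countable group, `C i` an increasing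
sequence of finite symmetric subsets with `C i \ (C (i-1))^5` nonempty, and `g_ i` a
sequence with `g_ i ∈ C (i+1) \ (C i)^5` (indices shifted so that every term of the
sequence satisfies the condition for `i ≥ 1`).  Then for any fixed `g ∈ G` there are at
most `2` pairs `(i, j)` with `i ≠ j` such that `g_ i * g * (g_ j)⁻¹ ∈ C 0`. -/
theorem at_most_two_solutions {G : Type*} [Group G] [Countable G] [DecidableEq G]
    (C : ℕ → Finset G) (g_ : ℕ → G)
    (hmono : ∀ i, C i ⊆ C (i + 1))
    (hsym : ∀ i, (C i)⁻¹ = C i)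
    (hne : ∀ i, (C (i + 1) \ (C i) ^ 5).Nonempty)
    (hg : ∀ i, g_ i ∈ C (i + 1) \ (C i) ^ 5)
    (g : G) :
    {p : ℕ × ℕ | p.1 ≠ p.2 ∧ g_ p.1 * g * (g_ p.2)⁻¹ ∈ C 0}.Finite ∧
      {p : ℕ × ℕ | p.1 ≠ p.2 ∧ g_ p.1 * g * (g_ p.2)⁻¹ ∈ C 0}.ncard ≤ 2 :=
  at_most_two_solutions_general C g_ hmono hsym hg g
end

section
/- Let G be an infinite group and let I, H ⊆ G be finite subsets. Then there exists an infinite collection {h_i} ⊆ G such that for every i and every g ∈ I, h_i^{-1} g h_i ∉ H \ {g}. -/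
/-!
Call `h` bad if `h⁻¹ * g * h = k` for some `g ∈ I` and `k ∈ H \ {g}`. For fixed `g, k` the
set of such `h` is either empty or a left coset `h₀ • C(k)` of a centralizer. If only finitely
many `h` were good, `G` would be covered by finitely many of these cosets together with finitely
many points. By B. H. Neumann's lemma the points, being cosets of the trivial subgroup of
infinite index, can be dropped, so the centralizer cosets alone cover `G`. But `1` lies in
none of them, since `1⁻¹ * g * 1 = g ≠ k`.
-/

open scoped Pointwise

namespace Subgroup

variable {G : Type*} [Group G]

theorem biUnion_leftCoset_eq_univ_of_finite_compl [Infinite G] {ι : Type*}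
    {H : ι → Subgroup G} {g : ι → G} {s : Finset ι}
    (hfin : (⋃ i ∈ s, g i • (H i : Set G))ᶜ.Finite) :
    ⋃ i ∈ s, g i • (H i : Set G) = Set.univ := by
  classical
  let H' : ι ⊕ G → Subgroup G := Sum.elim H fun _ => ⊥
  let g' : ι ⊕ G → G := Sum.elim g id
  have hcovers : ⋃ i ∈ s.disjSum hfin.toFinset, g' i • (H' i : Set G) = Set.univ := by
    refine Set.eq_univ_of_forall fun x => ?_
    by_cases hx : x ∈ ⋃ i ∈ s, g i • (H i : Set G)
    · obtain ⟨i, hi, hxi⟩ := Set.mem_iUnion₂.mp hx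
      exact Set.mem_iUnion₂.mpr ⟨.inl i, Finset.inl_mem_disjSum.mpr hi, hxi⟩
    · refine Set.mem_iUnion₂.mpr ⟨.inr x, Finset.inr_mem_disjSum.mpr (by simpa using hx), ?_⟩
      simp [H', g']
  have hbot : ¬ (⊥ : Subgroup G).FiniteIndex := by
    rw [not_finiteIndex_iff, index_bot, Nat.card_eq_zero_of_infinite]
  refine Set.eq_univ_of_univ_subset ?_
  rw [← leftCoset_cover_filter_FiniteIndex hcovers]
  refine Set.iUnion₂_subset fun i hi => ?_
  obtain ⟨hi, hfi⟩ := Finset.mem_filter.mp hi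
  cases i with
  | inl i =>
    exact Set.subset_biUnion_of_mem (u := fun i => g i • (H i : Set G))
      (Finset.mem_coe.mpr (Finset.inl_mem_disjSum.mp hi))
  | inr x => exact absurd hfi hbot

theorem setOf_conj_eq_eq_leftCoset_centralizer {g k h₀ : G} (h₀_conj : h₀⁻¹ * g * h₀ = k) :
    {h : G | h⁻¹ * g * h = k} = h₀ • (centralizer {k} : Set G) := by
  ext h
  have hcomm : k * (h₀⁻¹ * h) = h₀⁻¹ * (g * h) := by rw [← h₀_conj]; group
  rw [mem_leftCoset_iff, SetLike.mem_coe, mem_centralizer_singleton_iff, hcomm, mul_assoc,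
    mul_right_inj, eq_comm, Set.mem_ofPred, mul_assoc, inv_mul_eq_iff_eq_mul]

theorem biUnion_setOf_conj_eq_eq_univ_of_finite_compl [Infinite G] {P : Finset (G × G)}
    (hfin : (⋃ p ∈ P, {h : G | h⁻¹ * p.1 * h = p.2})ᶜ.Finite) :
    ⋃ p ∈ P, {h : G | h⁻¹ * p.1 * h = p.2} = Set.univ := by
  classical
  let s := P.filter fun p => ∃ h₀ : G, h₀⁻¹ * p.1 * h₀ = p.2
  let c : G × G → G := fun p => if hp : ∃ h₀ : G, h₀⁻¹ * p.1 * h₀ = p.2 then hp.choose else 1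
  have hcoset (p : G × G) (hp : ∃ h₀ : G, h₀⁻¹ * p.1 * h₀ = p.2) :
      {h : G | h⁻¹ * p.1 * h = p.2} = c p • (centralizer {p.2} : Set G) := by
    simp only [c, dif_pos hp]
    exact setOf_conj_eq_eq_leftCoset_centralizer hp.choose_spec
  have hunion : ⋃ p ∈ P, {h : G | h⁻¹ * p.1 * h = p.2} =
      ⋃ p ∈ s, c p • (centralizer {p.2} : Set G) := by
    ext h
    simp only [Set.mem_iUnion, exists_prop, s, Finset.mem_filter, and_assoc]
    refine exists_congr fun p => and_congr_right fun _ => ⟨fun hh => ⟨⟨h, hh⟩, ?_⟩, ?_⟩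
    · rwa [← hcoset p ⟨h, hh⟩]
    · rintro ⟨hp, hh⟩
      rwa [← hcoset p hp] at hh
  rw [hunion] at hfin ⊢
  exact biUnion_leftCoset_eq_univ_of_finite_compl hfin

end Subgroup

theorem conjugation_avoidance_general {G : Type*} [Group G] [Infinite G]
    (I H : Finset G) :
    ∃ K : Set G, K.Infinite ∧
      ∀ h ∈ K, ∀ g ∈ I, h⁻¹ * g * h ∉ (H : Set G) \ {g} := by
  classical
  refine ⟨{h | ∀ g ∈ I, h⁻¹ * g * h ∉ (H : Set G) \ {g}}, fun hfin => ?_, fun h hh => hh⟩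
  let P := (I ×ˢ H).filter fun p => p.2 ≠ p.1
  have hbad : ⋃ p ∈ P, {h : G | h⁻¹ * p.1 * h = p.2} =
      {h | ∀ g ∈ I, h⁻¹ * g * h ∉ (H : Set G) \ {g}}ᶜ := by
    ext h
    simp [P, and_assoc]
  have hcover := Subgroup.biUnion_setOf_conj_eq_eq_univ_of_finite_compl (P := P)
    (by rwa [hbad, compl_compl])
  have hone : (1 : G) ∈ ⋃ p ∈ P, {h : G | h⁻¹ * p.1 * h = p.2} := hcover ▸ Set.mem_univ 1
  rw [hbad] at hone
  exact hone fun g _ hg => hg.2 (by simp)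

/-- **Lemma (conjugation avoidance).** Let `G` be a countably infinite group and
`I, H ⊆ G` finite subsets.  Then there exists an infinite collection `K ⊆ G` such that
for every `h ∈ K` and every `g ∈ I`, the conjugate `h⁻¹ * g * h` does not lie in
`H \ {g}`. -/
theorem conjugation_avoidance {G : Type*} [Group G] [Countable G] [Infinite G]
    (I H : Finset G) :
    ∃ K : Set G, K.Infinite ∧
      ∀ h ∈ K, ∀ g ∈ I, h⁻¹ * g * h ∉ (H : Set G) \ {g} :=
  conjugation_avoidance_general I H
end

section
/- The set M_G of mixing actions of a countable group G, equipped with the lead metric m(T,S) = d(T,S) + sup_{g∈G} a(T^g, S^g), is a separable metric space. -/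
open MeasureTheory Filter Topology
open scoped symmDiff

variable {X : Type*} [MeasurableSpace X] {G : Type*} [Group G]

/-- The pseudometric `a(T,S) = Σ_{i,j} 2^{-(i+j)} |μ(T A_i ∩ A_j) − μ(S A_i ∩ A_j)|`. -/
noncomputable def aDist (μ : Measure X) (A : ℕ → Set X) (T S : X → X) : ℝ :=
  ∑' p : ℕ × ℕ, (1 / 2 : ℝ) ^ (p.1 + p.2) *
    |(μ (T '' A p.1 ∩ A p.2)).toReal - (μ (S '' A p.1 ∩ A p.2)).toReal|

/-- The weak metric `d` on `G`-actions. -/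
noncomputable def dDist (μ : Measure X) (A : ℕ → Set X) (len : G → ℕ)
    (T S : G → X → X) : ℝ :=
  ∑' g : G, (1 / 2 : ℝ) ^ len g * ∑' i : ℕ, (1 / 2 : ℝ) ^ i *
    ((μ ((T g '' A i) ∆ (S g '' A i))).toReal +
      (μ ((T g⁻¹ '' A i) ∆ (S g⁻¹ '' A i))).toReal)

/-- The lead metric `m(T,S) = d(T,S) + sup_g a(T^g, S^g)`. -/
noncomputable def mDist (μ : Measure X) (A : ℕ → Set X) (len : G → ℕ)
    (T S : G → X → X) : ℝ :=
  dDist μ A len T S + ⨆ g : G, aDist μ A (T g) (S g)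

/-- `T : G → X → X` is a measure-preserving action of the group `G`. -/
def IsMPAction (μ : Measure X) (T : G → X → X) : Prop :=
  (∀ g : G, MeasurePreserving (T g) μ μ) ∧
    (∀ g h : G, ∀ x : X, T (g * h) x = T g (T h x)) ∧ (∀ x : X, T 1 x = x)

/-- A `G`-action `T` is mixing (w.r.t. a proper length function `len`):
`μ(T^g A ∩ B) → μ(A)μ(B)` as `|g| → ∞`. -/
def Mixing (μ : Measure X) (len : G → ℕ) (T : G → X → X) : Prop :=
  ∀ A B : Set X, MeasurableSet A → MeasurableSet B → ∀ ε : ℝ, 0 < ε →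
    ∃ N : ℕ, ∀ g : G, N < len g →
      |(μ (T g '' A ∩ B)).toReal - (μ A).toReal * (μ B).toReal| < ε

/-!
Fix `ε > 0`. The lead distance `m(T, S)` is below `ε` as soon as, for the first few sets `A_i`,
`T^g A_i` and `S^g A_i` (and likewise for `g⁻¹`) are `δ`-close in measure for `g` in a large
finite set `s ⊆ G`, while outside `s` both `T^g` and `S^g` make the `A_i` `δ`-independent.
For a mixing action the independence fails only at finitely many `g`, which we add to `s`; the
closeness data on `s` are recorded up to `δ / 2` by indices into a countable measure-dense family
of sets. Every mixing action thus gets a code in a countable set, actions with equal codes are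
`ε`-close, and one representative of each code, for each `ε = 1 / (k + 1)`, is a dense sequence.
-/

section WeightedSums

variable {ι : Type*} {w f : ι → ℝ} {C : ℝ}

theorem Summable.mul_of_nonneg_of_le (hw : Summable w) (hw0 : ∀ i, 0 ≤ w i) (hf0 : ∀ i, 0 ≤ f i)
    (hfC : ∀ i, f i ≤ C) : Summable fun i => w i * f i :=
  (hw.mul_right C).of_nonneg_of_le (fun i => mul_nonneg (hw0 i) (hf0 i))
    fun i => mul_le_mul_of_nonneg_left (hfC i) (hw0 i)

theorem tsum_mul_le_mul_tsum (hw : Summable w) (hw0 : ∀ i, 0 ≤ w i) (hf0 : ∀ i, 0 ≤ f i)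
    (hfC : ∀ i, f i ≤ C) : ∑' i, w i * f i ≤ C * ∑' i, w i := by
  rw [← tsum_mul_left]
  exact (hw.mul_of_nonneg_of_le hw0 hf0 hfC).tsum_le_tsum
    (fun i => by rw [mul_comm C]; exact mul_le_mul_of_nonneg_left (hfC i) (hw0 i))
    (hw.mul_left C)

theorem tsum_mul_le_of_le_on {ε : ℝ} (s : Finset ι) (hw : Summable w) (hw0 : ∀ i, 0 ≤ w i)
    (hf0 : ∀ i, 0 ≤ f i) (hfC : ∀ i, f i ≤ C) (hε : 0 ≤ ε) (hfs : ∀ i ∈ s, f i ≤ ε) :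
    ∑' i, w i * f i ≤ ε * ∑' i, w i + C * ∑' i : {i // i ∉ s}, w i := by
  have hpoint : ∀ i, w i * f i ≤ ε * w i + C * (↑s : Set ι)ᶜ.indicator w i := by
    intro i
    by_cases hi : i ∈ s
    · rw [Set.indicator_of_notMem (by simpa using hi), mul_zero, add_zero]
      nlinarith [hw0 i, hfs i hi]
    · rw [Set.indicator_of_mem (by simpa using hi)]
      nlinarith [hw0 i, hfC i]
  have hind : Summable ((↑s : Set ι)ᶜ.indicator w) := hw.indicator _
  rw [show ∑' i : {i // i ∉ s}, w i = ∑' i, (↑s : Set ι)ᶜ.indicator w i from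
      tsum_subtype (↑s : Set ι)ᶜ w, ← tsum_mul_left, ← tsum_mul_left,
    ← (hw.mul_left ε).tsum_add (hind.mul_left C)]
  exact (hw.mul_of_nonneg_of_le hw0 hf0 hfC).tsum_le_tsum hpoint
    ((hw.mul_left ε).add (hind.mul_left C))

theorem tendsto_finset_product_self_atTop {α : Type*} :
    Tendsto (fun t : Finset α => t ×ˢ t) atTop atTop := by
  classical
  exact tendsto_atTop_finset_of_monotone (fun _ _ h => Finset.product_subset_product h h)
    fun p => ⟨{p.1, p.2}, by simp⟩

theorem summable_half_pow_add : Summable fun p : ℕ × ℕ => (1 / 2 : ℝ) ^ (p.1 + p.2) := by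
  simp_rw [pow_add]
  exact summable_geometric_two.mul_of_nonneg summable_geometric_two
    (fun _ => by positivity) fun _ => by positivity

end WeightedSums

section MeasureBounds

variable (μ : Measure X)

theorem abs_measureReal_sub_le_one [IsProbabilityMeasure μ] (E F : Set X) :
    |μ.real E - μ.real F| ≤ 1 := by
  rw [abs_sub_le_iff]
  constructor <;> linarith [measureReal_nonneg (μ := μ) (s := E),
    measureReal_nonneg (μ := μ) (s := F), measureReal_le_one (μ := μ) (s := E),
    measureReal_le_one (μ := μ) (s := F)]

theorem abs_measureReal_inter_sub_le_symmDiff [IsFiniteMeasure μ] (E F C : Set X) :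
    |μ.real (E ∩ C) - μ.real (F ∩ C)| ≤ μ.real (E ∆ F) := by
  have key : ∀ E F : Set X, μ.real (E ∩ C) ≤ μ.real (F ∩ C) + μ.real (E ∆ F) := by
    intro E F
    refine (measureReal_mono fun x hx => ?_).trans (measureReal_union_le _ _)
    by_cases hF : x ∈ F
    · exact Or.inl ⟨hF, hx.2⟩
    · exact Or.inr (Set.mem_symmDiff.2 (Or.inl ⟨hx.1, hF⟩))
  rw [abs_sub_le_iff]
  exact ⟨by linarith [key E F], by linarith [symmDiff_comm F E ▸ key F E]⟩

theorem measureReal_symmDiff_le_of_approx {E F B : Set X} {δ : ℝ} (hδ : 0 ≤ δ)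
    (hE : μ (E ∆ B) < ENNReal.ofReal (δ / 2)) (hF : μ (F ∆ B) < ENNReal.ofReal (δ / 2)) :
    μ.real (E ∆ F) ≤ δ := by
  refine ENNReal.toReal_le_of_le_ofReal hδ ((measure_symmDiff_le E B F).trans ?_)
  rw [symmDiff_comm B F, ← add_halves δ, ENNReal.ofReal_add (by positivity) (by positivity)]
  exact (ENNReal.add_lt_add hE hF).le

end MeasureBounds

def AlmostIndependent (μ : Measure X) (A : ℕ → Set X) (t : Finset ℕ) (δ : ℝ) (T : X → X) :
    Prop :=
  ∀ i ∈ t, ∀ j ∈ t, |μ.real (T '' A i ∩ A j) - μ.real (A i) * μ.real (A j)| ≤ δ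

def ImagesCloseOn (μ : Measure X) (A : ℕ → Set X) (s : Finset G) (t : Finset ℕ) (δ : ℝ)
    (T S : G → X → X) : Prop :=
  ∀ g ∈ s, ∀ i ∈ t, μ.real ((T g '' A i) ∆ (S g '' A i)) ≤ δ ∧
    μ.real ((T g⁻¹ '' A i) ∆ (S g⁻¹ '' A i)) ≤ δ

section LeadMetricBounds

variable (μ : Measure X) [IsProbabilityMeasure μ] (A : ℕ → Set X)

theorem aDist_le (T S : X → X) (t : Finset ℕ) {δ : ℝ} (hδ : 0 ≤ δ)
    (h : ∀ i ∈ t, ∀ j ∈ t, |μ.real (T '' A i ∩ A j) - μ.real (S '' A i ∩ A j)| ≤ δ) :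
    aDist μ A T S ≤ δ * ∑' p : ℕ × ℕ, (1 / 2 : ℝ) ^ (p.1 + p.2) +
      ∑' p : {p : ℕ × ℕ // p ∉ t ×ˢ t}, (1 / 2 : ℝ) ^ (p.1.1 + p.1.2) := by
  have := tsum_mul_le_of_le_on (t ×ˢ t) summable_half_pow_add
    (fun _ => by positivity) (fun _ => abs_nonneg _) (fun _ => abs_measureReal_sub_le_one μ _ _)
    hδ fun p hp => h _ (Finset.mem_product.1 hp).1 _ (Finset.mem_product.1 hp).2
  rwa [one_mul] at this

theorem dDist_le (len : G → ℕ) (hsum : Summable fun g : G => (1 / 2 : ℝ) ^ len g)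
    (T S : G → X → X) (s : Finset G) (t : Finset ℕ) {δ : ℝ} (hδ : 0 ≤ δ)
    (h : ImagesCloseOn μ A s t δ T S) :
    dDist μ A len T S ≤ (4 * δ + 2 * ∑' i : {i : ℕ // i ∉ t}, (1 / 2 : ℝ) ^ (i : ℕ)) *
        ∑' g, (1 / 2 : ℝ) ^ len g + 4 * ∑' g : {g : G // g ∉ s}, (1 / 2 : ℝ) ^ len g := by
  set f : G → ℕ → ℝ := fun g i =>
    μ.real ((T g '' A i) ∆ (S g '' A i)) + μ.real ((T g⁻¹ '' A i) ∆ (S g⁻¹ '' A i))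
  have hf0 : ∀ g i, 0 ≤ f g i := fun g i => add_nonneg measureReal_nonneg measureReal_nonneg
  have hf2 : ∀ g i, f g i ≤ 2 := fun g i => by
    linarith [measureReal_le_one (μ := μ) (s := (T g '' A i) ∆ (S g '' A i)),
      measureReal_le_one (μ := μ) (s := (T g⁻¹ '' A i) ∆ (S g⁻¹ '' A i))]
  have hgeom0 : ∀ i : ℕ, (0 : ℝ) ≤ (1 / 2) ^ i := fun _ => by positivity
  have hinner : ∀ g, ∑' i, (1 / 2 : ℝ) ^ i * f g i ≤ 4 := fun g =>
    (tsum_mul_le_mul_tsum summable_geometric_two hgeom0 (hf0 g) (hf2 g)).trans_eq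
      (by rw [tsum_geometric_two]; norm_num)
  have htail0 : 0 ≤ ∑' i : {i : ℕ // i ∉ t}, (1 / 2 : ℝ) ^ (i : ℕ) :=
    tsum_nonneg fun _ => by positivity
  have hinner_s : ∀ g ∈ s, ∑' i, (1 / 2 : ℝ) ^ i * f g i ≤
      4 * δ + 2 * ∑' i : {i : ℕ // i ∉ t}, (1 / 2 : ℝ) ^ (i : ℕ) := fun g hg => by
    have := tsum_mul_le_of_le_on t summable_geometric_two hgeom0 (hf0 g) (hf2 g)
      (by positivity : 0 ≤ 2 * δ) fun i hi => by linarith [(h g hg i hi).1, (h g hg i hi).2]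
    rw [tsum_geometric_two] at this
    linarith
  exact tsum_mul_le_of_le_on s hsum (fun _ => by positivity)
    (fun g => tsum_nonneg fun i => mul_nonneg (hgeom0 i) (hf0 g i)) hinner (by positivity)
    hinner_s

theorem mDist_le (len : G → ℕ) (hsum : Summable fun g : G => (1 / 2 : ℝ) ^ len g)
    (T S : G → X → X) (s : Finset G) (t : Finset ℕ) {δ : ℝ} (hδ : 0 ≤ δ)
    (hnear : ImagesCloseOn μ A s t δ T S)
    (hfar : ∀ g ∉ s, AlmostIndependent μ A t δ (T g) ∧ AlmostIndependent μ A t δ (S g)) :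
    mDist μ A len T S ≤
      (4 * δ + 2 * ∑' i : {i : ℕ // i ∉ t}, (1 / 2 : ℝ) ^ (i : ℕ)) * ∑' g, (1 / 2 : ℝ) ^ len g +
        4 * ∑' g : {g : G // g ∉ s}, (1 / 2 : ℝ) ^ len g +
      (2 * δ * ∑' p : ℕ × ℕ, (1 / 2 : ℝ) ^ (p.1 + p.2) +
        ∑' p : {p : ℕ × ℕ // p ∉ t ×ˢ t}, (1 / 2 : ℝ) ^ (p.1.1 + p.1.2)) := by
  refine add_le_add (dDist_le μ A len hsum T S s t hδ hnear)
    (ciSup_le fun g => aDist_le μ A _ _ t (by positivity) fun i hi j hj => ?_)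
  by_cases hg : g ∈ s
  · exact (abs_measureReal_inter_sub_le_symmDiff μ _ _ _).trans
      (by linarith [(hnear g hg i hi).1])
  · obtain ⟨hT, hS⟩ := hfar g hg
    refine (abs_sub_le _ (μ.real (A i) * μ.real (A j)) _).trans ?_
    rw [abs_sub_comm (μ.real (A i) * _)]
    linarith [hT i hi j hj, hS i hi j hj]

theorem exists_mDist_lt (len : G → ℕ) (hsum : Summable fun g : G => (1 / 2 : ℝ) ^ len g)
    {ε : ℝ} (hε : 0 < ε) :
    ∃ t : Finset ℕ, ∃ δ > 0, ∃ s₀ : Finset G, ∀ s, s₀ ⊆ s → ∀ T S : G → X → X,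
      ImagesCloseOn μ A s t δ T S →
      (∀ g ∉ s, AlmostIndependent μ A t δ (T g) ∧ AlmostIndependent μ A t δ (S g)) →
      mDist μ A len T S < ε := by
  set W := ∑' g, (1 / 2 : ℝ) ^ len g
  set WA := ∑' p : ℕ × ℕ, (1 / 2 : ℝ) ^ (p.1 + p.2)
  have hW : 0 ≤ W := tsum_nonneg fun _ => by positivity
  have hWA : 0 ≤ WA := tsum_nonneg fun _ => by positivity
  -- with `δ = η` and the three tails below `η`, `mDist_le` gives `mDist ≤ η (6 W + 2 WA + 5)`
  set η := ε / (6 * W + 2 * WA + 6)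
  have hη : 0 < η := by positivity
  have hηε : η * (6 * W + 2 * WA + 6) = ε := div_mul_cancel₀ _ (by positivity)
  obtain ⟨t, htail, htailA⟩ :=
    (((tendsto_tsum_compl_atTop_zero fun i : ℕ => (1 / 2 : ℝ) ^ i).eventually
      (gt_mem_nhds hη)).and
    (((tendsto_tsum_compl_atTop_zero fun p : ℕ × ℕ => (1 / 2 : ℝ) ^ (p.1 + p.2)).comp
      tendsto_finset_product_self_atTop).eventually (gt_mem_nhds hη))).exists
  obtain ⟨s₀, hs₀⟩ := eventually_atTop.1
    ((tendsto_tsum_compl_atTop_zero fun g : G => (1 / 2 : ℝ) ^ len g).eventually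
      (gt_mem_nhds hη))
  refine ⟨t, η, hη, s₀, fun s hs T S hnear hfar => ?_⟩
  have hbound := mDist_le μ A len hsum T S s t hη.le hnear hfar
  have htailW : (∑' i : {i : ℕ // i ∉ t}, (1 / 2 : ℝ) ^ (i : ℕ)) * W ≤ η * W :=
    mul_le_mul_of_nonneg_right htail.le hW
  have := hs₀ s hs
  simp only [Function.comp_apply] at htailA
  nlinarith

end LeadMetricBounds

theorem Mixing.eventually_almostIndependent {ι : Type*} {μ : Measure X} {len : ι → ℕ}
    {T : ι → X → X} (hT : Mixing μ len T) (hproper : ∀ n : ℕ, {g : ι | len g ≤ n}.Finite)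
    {A : ℕ → Set X} (hA : ∀ i, MeasurableSet (A i)) (t : Finset ℕ) {δ : ℝ} (hδ : 0 < δ) :
    ∀ᶠ g in cofinite, AlmostIndependent μ A t δ (T g) := by
  simp only [AlmostIndependent, eventually_all_finset]
  intro i _ j _
  obtain ⟨N, hN⟩ := hT (A i) (A j) (hA i) (hA j) δ hδ
  exact eventually_cofinite.2
    ((hproper N).subset fun g hg => not_lt.1 fun hlt => hg (hN g hlt).le)

theorem IsMPAction.image_eq_preimage {μ : Measure X} {T : G → X → X} (hT : IsMPAction μ T)
    (g : G) : Set.image (T g) = Set.preimage (T g⁻¹) := by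
  obtain ⟨-, hmul, hone⟩ := hT
  exact Set.image_eq_preimage_of_inverse (fun x => by rw [← hmul, inv_mul_cancel, hone])
    fun x => by rw [← hmul, mul_inv_cancel, hone]

theorem IsMPAction.measurableSet_image {μ : Measure X} {T : G → X → X} (hT : IsMPAction μ T)
    (g : G) {E : Set X} (hE : MeasurableSet E) : MeasurableSet (T g '' E) := by
  rw [hT.image_eq_preimage]
  exact (hT.1 g⁻¹).measurable hE

theorem eqOn_of_image_graph_eq {α β : Type*} [DecidableEq α] [DecidableEq β] {s : Finset α}
    {f f' : α → β} (h : s.image (fun a => (a, f a)) = s.image (fun a => (a, f' a))) :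
    Set.EqOn f f' s := by
  have := congrArg (fun u : Finset (α × β) => (u : Set (α × β))) h
  simp only [Finset.coe_image] at this
  exact Set.graphOn_inj.1 this

theorem exists_seq_approx_of_countable_codes {α β : Type*} [Nonempty α] [Countable β]
    (dist : α → α → ℝ) (h : ∀ ε > 0, ∃ c : α → β, ∀ a b, c a = c b → dist a b < ε) :
    ∃ D : ℕ → α, ∀ a, ∀ ε > 0, ∃ n, dist (D n) a < ε := by
  choose c hc using fun k : ℕ => h (1 / (k + 1)) Nat.one_div_pos_of_nat
  have : Nonempty β := ⟨c 0 (Classical.arbitrary α)⟩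
  obtain ⟨e, he⟩ := exists_surjective_nat (ℕ × β)
  refine ⟨fun n => Function.invFun (c (e n).1) (e n).2, fun a ε hε => ?_⟩
  obtain ⟨k, hk⟩ := exists_nat_one_div_lt hε
  obtain ⟨n, hn⟩ := he (k, c k a)
  refine ⟨n, ?_⟩
  simp only [hn]
  exact (hc k _ a (Function.invFun_eq ⟨a, rfl⟩)).trans hk

def mixingActions (μ : Measure X) (len : G → ℕ) : Set (G → X → X) :=
  {T | IsMPAction μ T ∧ Mixing μ len T}

theorem exists_code_mDist_lt [MeasurableSpace.CountablyGenerated X] (μ : Measure X)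
    [IsProbabilityMeasure μ] (A : ℕ → Set X) (hA : ∀ i, MeasurableSet (A i)) (len : G → ℕ)
    (hproper : ∀ n : ℕ, {g : G | len g ≤ n}.Finite)
    (hsum : Summable fun g : G => (1 / 2 : ℝ) ^ len g) {ε : ℝ} (hε : 0 < ε) :
    ∃ c : mixingActions μ len → Finset G × Finset ((G × ℕ) × ℕ × ℕ),
      ∀ T S, c T = c S → mDist μ A len T S < ε := by
  classical
  obtain ⟨t, δ, hδ, s₀, hclose⟩ := exists_mDist_lt μ A len hsum hε
  obtain ⟨𝒜, h𝒜c, h𝒜⟩ := exists_countable_measureDense μ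
  obtain ⟨B, rfl⟩ := h𝒜c.exists_eq_range h𝒜.nonempty
  have happrox : ∀ E, MeasurableSet E → ∃ n, μ (E ∆ B n) < ENNReal.ofReal (δ / 2) := by
    intro E hE
    obtain ⟨_, ⟨n, rfl⟩, hn⟩ := h𝒜.approx E hE (measure_ne_top μ E) (δ / 2) (half_pos hδ)
    exact ⟨n, hn⟩
  choose! ψ hψ using happrox
  have hbad : ∀ T : mixingActions μ len, {g | ¬AlmostIndependent μ A t δ (T.1 g)}.Finite :=
    fun T => T.2.2.eventually_almostIndependent hproper hA t hδ
  let s : mixingActions μ len → Finset G := fun T => s₀ ∪ (hbad T).toFinset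
  refine ⟨fun T => (s T, (s T ×ˢ t).image fun x =>
    (x, ψ (T.1 x.1 '' A x.2), ψ (T.1 x.1⁻¹ '' A x.2))), fun T S hTS => ?_⟩
  obtain ⟨hs, hgraph⟩ := Prod.mk.inj hTS
  rw [← hs] at hgraph
  refine hclose (s T) Finset.subset_union_left T S (fun g hg i hi => ?_) fun g hg => ?_
  · have hψTS := eqOn_of_image_graph_eq hgraph
      (Finset.mem_product.2 ⟨hg, hi⟩ : (g, i) ∈ s T ×ˢ t)
    simp only [Prod.mk.injEq] at hψTS
    have happ : ∀ (U : mixingActions μ len) (g : G),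
        μ ((U.1 g '' A i) ∆ B (ψ (U.1 g '' A i))) < ENNReal.ofReal (δ / 2) :=
      fun U g => hψ _ (U.2.1.measurableSet_image g (hA i))
    exact ⟨measureReal_symmDiff_le_of_approx μ hδ.le (happ T g) (hψTS.1 ▸ happ S g),
      measureReal_symmDiff_le_of_approx μ hδ.le (happ T g⁻¹) (hψTS.2 ▸ happ S g⁻¹)⟩
  · have hgS : g ∉ s S := hs ▸ hg
    simp only [s, Finset.mem_union, Set.Finite.mem_toFinset, Set.mem_ofPred_eq, not_or,
      not_not] at hg hgS
    exact ⟨hg.2, hgS.2⟩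

/-- **Separability.**  The set `M_G` of mixing actions of a countable group `G`, with the
lead metric `m`, is separable: there is a countable family of mixing actions such that
every mixing action is within `ε` of some member of the family, for every `ε > 0`. -/
theorem mixing_separable [Countable G]
    (μ : Measure X) [IsProbabilityMeasure μ]
    (A : ℕ → Set X) (hA : ∀ i, MeasurableSet (A i))
    (hgen : MeasurableSpace.generateFrom (Set.range A) = ‹MeasurableSpace X›)
    (len : G → ℕ) (hproper : ∀ n : ℕ, {g : G | len g ≤ n}.Finite)
    (hsum : Summable fun g : G => ((1 : ℝ) / 2) ^ len g)
    (hexists : ∃ T : G → X → X, IsMPAction μ T ∧ Mixing μ len T) :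
    ∃ D : ℕ → G → X → X,
      (∀ n, IsMPAction μ (D n) ∧ Mixing μ len (D n)) ∧
      ∀ S : G → X → X, IsMPAction μ S → Mixing μ len S →
        ∀ ε : ℝ, 0 < ε → ∃ n : ℕ, mDist μ A len (D n) S < ε := by
  have : MeasurableSpace.CountablyGenerated X :=
    ⟨⟨Set.range A, Set.countable_range A, hgen.symm⟩⟩
  have : Nonempty (mixingActions μ len) := hexists.elim fun T hT => ⟨⟨T, hT⟩⟩
  obtain ⟨D, hD⟩ := exists_seq_approx_of_countable_codes
    (fun T S : mixingActions μ len => mDist μ A len T S)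
    fun ε hε => exists_code_mDist_lt μ A hA len hproper hsum hε
  exact ⟨fun n => D n, fun n => (D n).2, fun S hS hSmix => hD ⟨S, hS, hSmix⟩⟩
end

section
/- Let G be a group, F a finite subset, and G̃ a finite subset of G such that #(g G̃ △ G̃) < (ε / (8 (#F)^2)) · #G̃ for every g ∈ F F^{-1}. Let {b_i} be a collection with G = ⊔_i F b_i (disjoint union), and let G' = ⊔ { F b_i : F b_i ⊆ G̃ }. Then #(G̃ \ G') < (ε/8) · #G̃, and consequently #(G̃ \ G') < (ε/7) · #G' when ε ≤ 1. -/
/-!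
A point `x ∈ G̃` outside `G'` lies in a tile `F b` that leaves `G̃`, say at `f' b ∉ G̃`, while
`x = f b`; then `(f' f⁻¹) x ∉ G̃`, so `x` is on the boundary of `G̃` in some direction of
`F F⁻¹`. There are at most `#F ^ 2` directions and each boundary is controlled by the Følner
hypothesis, which gives the first bound; the second follows from `#G̃ = #(G̃ \ G') + #G'`.
-/

open Finset Pointwise
open scoped symmDiff

lemma lt_div_seven_mul_of_lt_div_eight_mul_add {d p ε : ℝ} (hd : 0 ≤ d) (hε : ε ≤ 1)
    (h : d < ε / 8 * (d + p)) : d < ε / 7 * p := by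
  nlinarith

section

variable {G : Type*} [Group G] [DecidableEq G]

lemma card_filter_mul_notMem_le_card_symmDiff (s : Finset G) (g : G) :
    #{x ∈ s | g * x ∉ s} ≤ #(s.image (g * ·) ∆ s) :=
  card_le_card_of_injOn (g * ·)
    (fun _ hx ↦ by
      rw [coe_filter] at hx
      exact mem_union_left _ (mem_sdiff.2 ⟨mem_image_of_mem _ hx.1, hx.2⟩))
    (fun _ _ _ _ h ↦ mul_left_cancel h)

lemma card_mul_inv_le_sq (F : Finset G) : #(F * F⁻¹) ≤ #F ^ 2 := by
  simpa [card_inv, sq] using card_mul_le (s := F) (t := F⁻¹)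

lemma one_mem_mul_inv {F : Finset G} (hF : F.Nonempty) : (1 : G) ∈ F * F⁻¹ := by
  obtain ⟨f, hf⟩ := hF
  exact mem_mul.2 ⟨f, hf, f⁻¹, inv_mem_inv hf, mul_inv_cancel f⟩

section Tiling

variable {ι : Type*} {F Gt G' : Finset G} {b : ι → G}

lemma sdiff_subset_biUnion_boundary (hcover : ∀ x : G, ∃ i, x ∈ F.image (· * b i))
    (hfull : ∀ i, F.image (· * b i) ⊆ Gt → F.image (· * b i) ⊆ G') :
    Gt \ G' ⊆ (F * F⁻¹).biUnion fun g ↦ {x ∈ Gt | g * x ∉ Gt} := by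
  intro x hx
  obtain ⟨hxGt, hxG'⟩ := mem_sdiff.1 hx
  obtain ⟨i, hxi⟩ := hcover x
  obtain ⟨y, hy, hyGt⟩ := not_subset.1 fun hsub ↦ hxG' (hfull i hsub hxi)
  obtain ⟨f, hf, rfl⟩ := mem_image.1 hxi
  obtain ⟨f', hf', rfl⟩ := mem_image.1 hy
  refine mem_biUnion.2 ⟨f' * f⁻¹, mul_mem_mul hf' (inv_mem_inv hf), mem_filter.2 ⟨hxGt, ?_⟩⟩
  simpa [mul_assoc] using hyGt

lemma card_sdiff_le_sum_card_boundary (hcover : ∀ x : G, ∃ i, x ∈ F.image (· * b i))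
    (hfull : ∀ i, F.image (· * b i) ⊆ Gt → F.image (· * b i) ⊆ G') :
    #(Gt \ G') ≤ ∑ g ∈ F * F⁻¹, #{x ∈ Gt | g * x ∉ Gt} :=
  (card_le_card (sdiff_subset_biUnion_boundary hcover hfull)).trans card_biUnion_le

end Tiling

end

theorem trimmed_tile_estimate_general {G : Type*} [Group G] [DecidableEq G]
    (F Gt G' : Finset G) (b : ℕ → G) (ε : ℝ)
    (htile : ∀ x : G, ∃! i : ℕ, x ∈ F.image (· * b i))
    (hG' : ∀ x : G, x ∈ G' ↔ ∃ i : ℕ, F.image (· * b i) ⊆ Gt ∧ x ∈ F.image (· * b i))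
    (hFolner : ∀ g ∈ F * F⁻¹,
      ((((Gt.image (g * ·)) \ Gt) ∪ (Gt \ (Gt.image (g * ·)))).card : ℝ) <
        ε / (8 * (F.card : ℝ) ^ 2) * Gt.card) :
    ((Gt \ G').card : ℝ) < ε / 8 * Gt.card ∧
      (ε ≤ 1 → ((Gt \ G').card : ℝ) < ε / 7 * G'.card) := by
  have hcover (x : G) : ∃ i, x ∈ F.image (· * b i) := (htile x).exists
  have hfull (i : ℕ) (hi : F.image (· * b i) ⊆ Gt) : F.image (· * b i) ⊆ G' :=
    fun x hx ↦ (hG' x).2 ⟨i, hi, hx⟩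
  have hF : F.Nonempty := by
    obtain ⟨i, hi⟩ := hcover 1
    exact image_nonempty.1 ⟨1, hi⟩
  set c := ε / (8 * (#F : ℝ) ^ 2) * #Gt
  have hc : 0 < c := (Nat.cast_nonneg _).trans_lt (hFolner 1 (one_mem_mul_inv hF))
  have hmain : (#(Gt \ G') : ℝ) < ε / 8 * #Gt :=
    calc (#(Gt \ G') : ℝ)
        ≤ ∑ g ∈ F * F⁻¹, (#{x ∈ Gt | g * x ∉ Gt} : ℝ) := by
          exact_mod_cast card_sdiff_le_sum_card_boundary hcover hfull
      _ < ∑ _g ∈ F * F⁻¹, c := sum_lt_sum_of_nonempty ⟨1, one_mem_mul_inv hF⟩ fun g hg ↦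
          (Nat.cast_le.2 (card_filter_mul_notMem_le_card_symmDiff Gt g)).trans_lt (hFolner g hg)
      _ ≤ #F ^ 2 * c := by
          rw [sum_const, nsmul_eq_mul]
          gcongr
          exact_mod_cast card_mul_inv_le_sq F
      _ = ε / 8 * #Gt := by
          have : (#F : ℝ) ≠ 0 := by exact_mod_cast hF.card_pos.ne'
          simp only [c]
          field_simp
  refine ⟨hmain, fun hε ↦ lt_div_seven_mul_of_lt_div_eight_mul_add (Nat.cast_nonneg _) hε ?_⟩
  have hG'Gt : G' ⊆ Gt := fun x hx ↦ by
    obtain ⟨i, hi, hxi⟩ := (hG' x).1 hx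
    exact hi hxi
  rwa [← card_sdiff_add_card_eq_card hG'Gt, Nat.cast_add] at hmain

/-- **Counting estimate for the trimmed tile.**  Let `G` be a group, `F` a finite subset,
and `G̃` a finite subset with `#(g • G̃ △ G̃) < (ε / (8 (#F)^2)) · #G̃` for every
`g ∈ F * F⁻¹`.  Let `{b i}` tile `G` by right translates of `F`, and let `G'` be the
union of those tiles `F * b i` entirely contained in `G̃`.  Then
`#(G̃ \ G') < (ε/8) · #G̃`, and consequently `#(G̃ \ G') < (ε/7) · #G'` when `ε ≤ 1`. -/
theorem trimmed_tile_estimate {G : Type*} [Group G] [DecidableEq G]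
    (F Gt G' : Finset G) (b : ℕ → G) (ε : ℝ) (hε : 0 < ε)
    (htile : ∀ x : G, ∃! i : ℕ, x ∈ F.image (· * b i))
    (hG' : ∀ x : G, x ∈ G' ↔ ∃ i : ℕ, F.image (· * b i) ⊆ Gt ∧ x ∈ F.image (· * b i))
    (hFolner : ∀ g ∈ F * F⁻¹,
      ((((Gt.image (g * ·)) \ Gt) ∪ (Gt \ (Gt.image (g * ·)))).card : ℝ) <
        ε / (8 * (F.card : ℝ) ^ 2) * Gt.card) :
    ((Gt \ G').card : ℝ) < ε / 8 * Gt.card ∧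
      (ε ≤ 1 → ((Gt \ G').card : ℝ) < ε / 7 * G'.card) :=
  trimmed_tile_estimate_general F Gt G' b ε htile hG' hFolner
end

section
/- Let G be a group, H ⊆ G finite with H = H^{-1}, and construct inductively g_1 ∉ H^5, C_1 ⊇ {g_1} ∪ H^5 finite symmetric, and generally g_n ∉ C_{n-1}^5 and C_n ⊇ {g_n} ∪ C_{n-1}^5 finite symmetric. Then for all distinct i, j: g_i g_j^{-1} ∉ H^{-1} H, i.e., the elements g_i lie in distinct right cosets of any translate structure determined by H^{-1}H. -/
open Pointwise

/-! If `g (i+1) * (g (j+1))⁻¹ ∈ H⁻¹ * H` with `j < i`, then, as `H` and `g (j+1)` lie in the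
symmetric set `C i`, the element `g (i+1)` lies in `(C i) ^ 3 ⊆ (C i) ^ 5`, contradicting its
choice. The case `i < j` reduces to this one because `H⁻¹ * H` is closed under inversion. -/

namespace Finset

variable {G : Type*} [Group G] [DecidableEq G] {s t : Finset G} {x y : G}

lemma one_mem_sq_of_inv_eq (hs : s⁻¹ = s) (hne : s.Nonempty) : (1 : G) ∈ s ^ 2 := by
  have h : (1 : G) ∈ s⁻¹ * s :=
    one_mem_inv_mul_iff.mpr ((disjoint_self_iff_empty s).not.mpr hne.ne_empty)
  rwa [hs, ← sq] at h

lemma pow_subset_pow_add_two (hs : s⁻¹ = s) {n : ℕ} (hn : n ≠ 0) : s ^ n ⊆ s ^ (n + 2) := by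
  rcases s.eq_empty_or_nonempty with rfl | hne
  · simp [empty_pow hn]
  · rw [pow_add]
    exact subset_mul_left _ (one_mem_sq_of_inv_eq hs hne)

lemma subset_pow_five (hs : s⁻¹ = s) : s ⊆ s ^ 5 := by
  calc s = s ^ 1 := (pow_one s).symm
    _ ⊆ s ^ 3 := pow_subset_pow_add_two hs one_ne_zero
    _ ⊆ s ^ 5 := pow_subset_pow_add_two hs (by norm_num)

lemma mem_pow_succ_of_mul_inv_mem {n : ℕ} (hx : x ∈ s) (h : y * x⁻¹ ∈ s ^ n) :
    y ∈ s ^ (n + 1) := by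
  rw [pow_succ]
  simpa using mul_mem_mul h hx

lemma mul_inv_notMem_inv_mul_of_notMem_pow_five (hs : s⁻¹ = s) (ht : t ⊆ s) (hx : x ∈ s)
    (hy : y ∉ s ^ 5) : y * x⁻¹ ∉ t⁻¹ * t := by
  intro h
  have hsq : t⁻¹ * t ⊆ s ^ 2 := calc
    t⁻¹ * t ⊆ s⁻¹ * s := mul_subset_mul (inv_subset_inv ht) ht
    _ = s ^ 2 := by rw [hs, sq]
  exact hy (pow_subset_pow_add_two hs (by norm_num) (mem_pow_succ_of_mul_inv_mem hx (hsq h)))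

end Finset

theorem sequence_separation_general {G : Type*} [Group G] [DecidableEq G]
    (H : Finset G)
    (C : ℕ → Finset G) (g : ℕ → G)
    (hC0 : C 0 = H)
    (hCsym : ∀ n, (C n)⁻¹ = C n)
    (hgnot : ∀ n, g (n + 1) ∉ (C n) ^ 5)
    (hCsucc : ∀ n, insert (g (n + 1)) ((C n) ^ 5) ⊆ C (n + 1)) :
    ∀ i j : ℕ, i ≠ j → g (i + 1) * (g (j + 1))⁻¹ ∉ H⁻¹ * H := by
  intro i j hij
  have hmono : Monotone C := monotone_nat_of_le_succ fun n =>
    (Finset.subset_pow_five (hCsym n)).trans ((Finset.subset_insert _ _).trans (hCsucc n))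
  wlog hji : j < i generalizing i j
  · intro h
    refine this j i hij.symm (lt_of_le_of_ne (not_lt.mp hji) hij) ?_
    simpa using Finset.inv_mem_inv h
  rw [← hC0]
  exact Finset.mul_inv_notMem_inv_mul_of_notMem_pow_five (hCsym i) (hmono (Nat.zero_le i))
    (hmono hji (hCsucc j (Finset.mem_insert_self _ _))) (hgnot i)

/-- **Separation property of the inductively chosen sequence.**  Let `G` be an infinite
group, `H ⊆ G` a finite symmetric subset, and construct inductively finite symmetric sets
`C n` and elements `g n` with `C 0 = H`, `g (n+1) ∉ (C n)^5`, and
`C (n+1) ⊇ {g (n+1)} ∪ (C n)^5`.  Then for all distinct `i, j` one has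
`g i * (g j)⁻¹ ∉ H⁻¹ * H`, i.e. the `g i` lie in distinct right cosets determined by
`H⁻¹ * H`. -/
theorem sequence_separation {G : Type*} [Group G] [Infinite G] [DecidableEq G]
    (H : Finset G) (hH : H⁻¹ = H)
    (C : ℕ → Finset G) (g : ℕ → G)
    (hC0 : C 0 = H)
    (hCsym : ∀ n, (C n)⁻¹ = C n)
    (hgnot : ∀ n, g (n + 1) ∉ (C n) ^ 5)
    (hCsucc : ∀ n, insert (g (n + 1)) ((C n) ^ 5) ⊆ C (n + 1)) :
    ∀ i j : ℕ, i ≠ j → g (i + 1) * (g (j + 1))⁻¹ ∉ H⁻¹ * H :=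
  sequence_separation_general H C g hC0 hCsym hgnot hCsucc
end
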